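/- Let σ_B be a positive definite m×m matrix, Δ ∈ H^{mn}_+, Λ_R ∈ H^n, and β ∈ ℝ. Define ρ_{RB} = exp(I_n ⊗ log σ_B − βΔ + Λ_R ⊗ I_m − I_{mn}). Then ρ_{RB} is positive definite Hermitian, and it is the unique minimizer over H^{mn}_+ of the partial Lagrangian ρ ↦ Tr(ρ log ρ) − Tr(ρ (I_n ⊗ log σ_B − βΔ + Λ_R ⊗ I_m)). -/

import Mathlib

open Matrix Kronecker
open scoped ComplexOrder

/-- Matrix logarithm of a Hermitian matrix via its spectral decomposition,
with the convention `Real.log 0 = 0` off the support. -/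
noncomputable def matLog {n : Type*} [Fintype n] [DecidableEq n] {A : Matrix n n ℂ}
    (hA : A.IsHermitian) : Matrix n n ℂ :=
  (hA.eigenvectorUnitary : Matrix n n ℂ) *
    Matrix.diagonal (fun i => (Real.log (hA.eigenvalues i) : ℂ)) *
    star (hA.eigenvectorUnitary : Matrix n n ℂ)

/-- `Tr(A log A)` for a Hermitian matrix `A`, i.e. `∑ λᵢ log λᵢ` with `0 log 0 = 0`. -/
noncomputable def entSum {n : Type*} [Fintype n] [DecidableEq n] {A : Matrix n n ℂ}
    (hA : A.IsHermitian) : ℝ :=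
  ∑ i, hA.eigenvalues i * Real.log (hA.eigenvalues i)

/-- Quantum relative entropy `S(ρ‖σ) = Tr(ρ log ρ) − Tr(ρ log σ)`. -/
noncomputable def qRelEnt {n : Type*} [Fintype n] [DecidableEq n] {ρ σ : Matrix n n ℂ}
    (hρ : ρ.IsHermitian) (hσ : σ.IsHermitian) : ℝ :=
  entSum hρ - (Matrix.trace (ρ * matLog hσ)).re

/-- The objective `ρ ↦ Tr(ρ log ρ) − Tr(ρ Δ̃)`. -/
noncomputable def obj {n : Type*} [Fintype n] [DecidableEq n] (Δ : Matrix n n ℂ)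
    {ρ : Matrix n n ℂ} (hρ : ρ.IsHermitian) : ℝ :=
  entSum hρ - (Matrix.trace (ρ * Δ)).re

/-- Partial trace over the first tensor factor. -/
noncomputable def ptrace1 {n m : Type*} [Fintype n] (C : Matrix (n × m) (n × m) ℂ) :
    Matrix m m ℂ :=
  Matrix.of fun k l => ∑ i, C (i, k) (i, l)

/-- Partial trace over the second tensor factor. -/
noncomputable def ptrace2 {n m : Type*} [Fintype m] (C : Matrix (n × m) (n × m) ℂ) :
    Matrix n n ℂ :=
  Matrix.of fun i j => ∑ k, C (i, k) (j, k)

/-!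
Write `ρ = U diag(p) U*`, `H = V diag(l) V*` and `W = U* V`; the numbers `|W i j|²` form a
doubly stochastic matrix. Since `log (exp (H - 1)) = H - 1`, the objective at `σ = exp (H - 1)`
is `-Tr σ`, and
  `obj ρ - obj σ = ∑ i j, |W i j|² (p i log p i - p i l j + e^(l j - 1))`,
where each bracket equals `e^(l j - 1) klFun (p i / e^(l j - 1)) ≥ 0`. Equality forces
`p i = e^(l j - 1)` whenever `W i j ≠ 0`, i.e. `diag(p) W = W diag(e^(l - 1))`, which says `ρ = σ`.
-/

namespace Real
open InformationTheory

lemma mul_log_sub_mul_add_exp_eq {x l : ℝ} :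
    x * log x - x * l + exp (l - 1) = exp (l - 1) * klFun (x / exp (l - 1)) := by
  have hy := (exp_pos (l - 1)).ne'
  rcases eq_or_ne x 0 with rfl | hx
  · simp [klFun]
  · rw [klFun, log_div hx hy, log_exp]
    field_simp
    ring

lemma mul_log_sub_mul_add_exp_nonneg {x : ℝ} (l : ℝ) (hx : 0 ≤ x) :
    0 ≤ x * log x - x * l + exp (l - 1) := by
  rw [mul_log_sub_mul_add_exp_eq]
  exact mul_nonneg (exp_pos _).le (klFun_nonneg (div_nonneg hx (exp_pos _).le))

lemma mul_log_sub_mul_add_exp_eq_zero_iff {x l : ℝ} (hx : 0 ≤ x) :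
    x * log x - x * l + exp (l - 1) = 0 ↔ x = exp (l - 1) := by
  rw [mul_log_sub_mul_add_exp_eq, mul_eq_zero, klFun_eq_zero_iff (div_nonneg hx (exp_pos _).le),
    div_eq_one_iff_eq (exp_pos _).ne']
  simp [(exp_pos _).ne']

end Real

namespace Matrix

lemma diagonal_mul_eq_mul_diagonal_iff {k R : Type*} [DecidableEq k] [Fintype k] [CommSemiring R]
    [IsCancelMulZero R] {S : Matrix k k R} {a b : k → R} :
    diagonal a * S = S * diagonal b ↔ ∀ i j, S i j ≠ 0 → a i = b j := by
  simp only [← Matrix.ext_iff, diagonal_mul, mul_diagonal]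
  refine forall₂_congr fun i j => ⟨fun h hS => mul_right_cancel₀ hS ?_, fun h => ?_⟩
  · rw [h, mul_comm]
  · by_cases hS : S i j = 0
    · simp [hS]
    · rw [h hS, mul_comm]

lemma IsHermitian.kronecker {ι κ R : Type*} [CommSemiring R] [StarRing R] {M : Matrix ι ι R}
    {N : Matrix κ κ R} (hM : M.IsHermitian) (hN : N.IsHermitian) : (M ⊗ₖ N).IsHermitian := by
  rw [IsHermitian, conjTranspose_kronecker, hM.eq, hN.eq]

variable {k : Type*} [Fintype k] [DecidableEq k]

lemma IsHermitian.posDef_exp {𝕜 : Type*} [RCLike 𝕜] {A : Matrix k k 𝕜} (hA : A.IsHermitian) :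
    (NormedSpace.exp A).PosDef := by
  set B : Matrix k k 𝕜 := (1 / 2 : 𝕜) • A
  have hB : Bᴴ = B := by simp [B, hA.eq]
  have hsplit : NormedSpace.exp A = (NormedSpace.exp B)ᴴ * NormedSpace.exp B := by
    rw [← exp_conjTranspose, hB, ← exp_add_of_commute _ _ (Commute.refl B), ← add_smul,
      add_halves, one_smul]
  rw [hsplit]
  exact PosDef.conjTranspose_mul_self _ (mulVec_injective_iff_isUnit.mpr (isUnit_exp _))

variable {A B U V W : Matrix k k ℂ}

lemma conj_diagonal_eq_conj_diagonal_iff (hU : U ∈ unitaryGroup k ℂ) (hV : V ∈ unitaryGroup k ℂ)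
    {a b : k → ℂ} :
    U * diagonal a * star U = V * diagonal b * star V ↔ ∀ i j, (star U * V) i j ≠ 0 → a i = b j := by
  rw [← diagonal_mul_eq_mul_diagonal_iff]
  constructor
  · intro h
    calc diagonal a * (star U * V) = star U * (U * diagonal a * star U) * V := by
          simp only [← mul_assoc, mem_unitaryGroup_iff'.mp hU, one_mul]
      _ = star U * V * diagonal b := by
          rw [h]; simp only [mul_assoc, mem_unitaryGroup_iff'.mp hV, mul_one]
  · intro h
    calc U * diagonal a * star U = U * (diagonal a * (star U * V)) * star V := by
          simp only [mul_assoc, mem_unitaryGroup_iff.mp hV, mul_one]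
      _ = V * diagonal b * star V := by
          rw [h]; simp only [← mul_assoc, mem_unitaryGroup_iff.mp hU, one_mul]

lemma sum_normSq_row_eq_one (hW : W ∈ unitaryGroup k ℂ) (i : k) :
    ∑ j, Complex.normSq (W i j) = 1 := by
  have h := congrFun (congrFun (mem_unitaryGroup_iff.mp hW) i) i
  rw [mul_apply, one_apply_eq] at h
  simp only [star_apply, Complex.star_def, Complex.mul_conj] at h
  exact_mod_cast h

lemma sum_normSq_col_eq_one (hW : W ∈ unitaryGroup k ℂ) (j : k) :
    ∑ i, Complex.normSq (W i j) = 1 := by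
  simpa [star_apply, Complex.normSq_conj] using
    sum_normSq_row_eq_one (Unitary.star_mem hW) j

lemma re_trace_conj_diagonal_mul_conj_diagonal (p l : k → ℝ) :
    (trace ((U * diagonal (fun i => (p i : ℂ)) * star U) *
        (V * diagonal (fun j => (l j : ℂ)) * star V))).re =
      ∑ i, ∑ j, p i * l j * Complex.normSq ((star U * V) i j) := by
  set S := star U * V
  have hcycle : trace ((U * diagonal (fun i => (p i : ℂ)) * star U) *
        (V * diagonal (fun j => (l j : ℂ)) * star V)) =
      trace (diagonal (fun i => (p i : ℂ)) * (S * diagonal (fun j => (l j : ℂ)) * star S)) := by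
    rw [mul_assoc U, mul_assoc U, trace_mul_comm U]
    simp only [S, star_mul, star_star, mul_assoc]
  rw [hcycle, trace, Complex.re_sum]
  refine Finset.sum_congr rfl fun i _ => ?_
  rw [diag_apply, diagonal_mul, mul_apply, Finset.mul_sum, Complex.re_sum]
  refine Finset.sum_congr rfl fun j _ => ?_
  rw [mul_diagonal, star_apply, Complex.star_def, mul_right_comm (S i j), Complex.mul_conj]
  norm_cast
  ring

lemma exp_conj_diagonal (hV : V ∈ unitaryGroup k ℂ) (d : k → ℝ) :
    NormedSpace.exp (V * diagonal (fun i => (d i : ℂ)) * star V) =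
      V * diagonal (fun i => (Real.exp (d i) : ℂ)) * star V := by
  rw [← inv_eq_left_inv (mem_unitaryGroup_iff'.mp hV),
    exp_conj V _ ⟨⟨V, star V, mem_unitaryGroup_iff.mp hV, mem_unitaryGroup_iff'.mp hV⟩, rfl⟩,
    exp_diagonal]
  simp only [Pi.exp_def, ← Complex.exp_eq_exp_ℂ, Complex.ofReal_exp]

lemma IsHermitian.eq_conj_diagonal (hA : A.IsHermitian) :
    A = (hA.eigenvectorUnitary : Matrix k k ℂ) * diagonal (fun i => (hA.eigenvalues i : ℂ)) *
      star (hA.eigenvectorUnitary : Matrix k k ℂ) :=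
  hA.spectral_theorem

lemma IsHermitian.exp_eq_conj_diagonal (hA : A.IsHermitian) :
    NormedSpace.exp A =
      hA.eigenvectorUnitary * diagonal (fun i => (Real.exp (hA.eigenvalues i) : ℂ)) *
        star (hA.eigenvectorUnitary : Matrix k k ℂ) :=
  (congrArg NormedSpace.exp hA.eq_conj_diagonal).trans
    (exp_conj_diagonal hA.eigenvectorUnitary.2 _)

lemma IsHermitian.exp_sub_one_eq_conj_diagonal (hA : A.IsHermitian) :
    NormedSpace.exp (A - 1) =
      hA.eigenvectorUnitary * diagonal (fun i => (Real.exp (hA.eigenvalues i - 1) : ℂ)) *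
        star (hA.eigenvectorUnitary : Matrix k k ℂ) := by
  have hV := hA.eigenvectorUnitary.2
  have hsub : A - 1 = hA.eigenvectorUnitary *
      diagonal (fun i => ((hA.eigenvalues i - 1 : ℝ) : ℂ)) *
        star (hA.eigenvectorUnitary : Matrix k k ℂ) := by
    have hdiag : diagonal (fun i => ((hA.eigenvalues i - 1 : ℝ) : ℂ)) =
        diagonal (fun i => (hA.eigenvalues i : ℂ)) - 1 := by
      rw [← diagonal_one, diagonal_sub]
      push_cast
      rfl
    rw [hdiag, mul_sub, sub_mul, mul_one, mem_unitaryGroup_iff.mp hV, ← hA.eq_conj_diagonal]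
  rw [hsub, exp_conj_diagonal hV]

lemma re_trace_mul_eq_sum (hA : A.IsHermitian) (hB : B.IsHermitian) :
    (trace (A * B)).re = ∑ i, ∑ j, hA.eigenvalues i * hB.eigenvalues j *
      Complex.normSq ((star (hA.eigenvectorUnitary : Matrix k k ℂ) * hB.eigenvectorUnitary) i j) := by
  rw [← re_trace_conj_diagonal_mul_conj_diagonal,
    ← congrArg₂ (· * ·) hA.eq_conj_diagonal hB.eq_conj_diagonal]

end Matrix

section Gibbs

variable {k : Type*} [Fintype k] [DecidableEq k] {A V H ρ : Matrix k k ℂ}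

lemma matLog_isHermitian (hA : A.IsHermitian) : (matLog hA).IsHermitian := by
  rw [matLog, star_eq_conjTranspose]
  exact isHermitian_mul_mul_conjTranspose _
    (isHermitian_diagonal_of_self_adjoint _ (funext fun i => Complex.conj_ofReal _))

lemma matLog_eq_of_eq_conj_diagonal (hA : A.IsHermitian) (hV : V ∈ unitaryGroup k ℂ) {e : k → ℝ}
    (h : A = V * diagonal (fun i => (e i : ℂ)) * star V) :
    matLog hA = V * diagonal (fun i => (Real.log (e i) : ℂ)) * star V := by
  have hU := hA.eigenvectorUnitary.2
  rw [hA.eq_conj_diagonal, conj_diagonal_eq_conj_diagonal_iff hU hV] at h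
  rw [matLog, conj_diagonal_eq_conj_diagonal_iff hU hV]
  intro i j hij
  rw [Complex.ofReal_inj.mp (h i j hij)]

lemma entSum_eq_re_trace_mul_matLog (hA : A.IsHermitian) :
    entSum hA = (trace (A * matLog hA)).re := by
  have hprod : A * matLog hA =
      (hA.eigenvectorUnitary * diagonal (fun i => (hA.eigenvalues i : ℂ)) *
        star (hA.eigenvectorUnitary : Matrix k k ℂ)) * matLog hA :=
    congrArg (· * matLog hA) hA.eq_conj_diagonal
  rw [hprod, matLog, re_trace_conj_diagonal_mul_conj_diagonal,
    mem_unitaryGroup_iff'.mp hA.eigenvectorUnitary.2, entSum]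
  simp [one_apply]

lemma matLog_exp (hH : H.IsHermitian) (h : (NormedSpace.exp H).IsHermitian) : matLog h = H := by
  rw [matLog_eq_of_eq_conj_diagonal h hH.eigenvectorUnitary.2 hH.exp_eq_conj_diagonal]
  simp only [Real.log_exp]
  exact hH.eq_conj_diagonal.symm

lemma obj_exp_sub_one (hH : H.IsHermitian) (hσ : (NormedSpace.exp (H - 1)).IsHermitian) :
    obj H hσ = -∑ j, Real.exp (hH.eigenvalues j - 1) := by
  rw [obj, entSum_eq_re_trace_mul_matLog, matLog_exp (hH.sub isHermitian_one), mul_sub, mul_one,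
    trace_sub, Complex.sub_re, sub_sub_cancel_left, hH.exp_sub_one_eq_conj_diagonal,
    trace_mul_cycle, mem_unitaryGroup_iff'.mp hH.eigenvectorUnitary.2, one_mul, trace_diagonal,
    ← Complex.ofReal_sum, Complex.ofReal_re]

lemma obj_sub_obj_exp_sub_one (hH : H.IsHermitian)
    (hσ : (NormedSpace.exp (H - 1)).IsHermitian) (hρ : ρ.IsHermitian) :
    obj H hρ - obj H hσ = ∑ i, ∑ j,
      Complex.normSq ((star (hρ.eigenvectorUnitary : Matrix k k ℂ) * hH.eigenvectorUnitary) i j) *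
        (hρ.eigenvalues i * Real.log (hρ.eigenvalues i) - hρ.eigenvalues i * hH.eigenvalues j +
          Real.exp (hH.eigenvalues j - 1)) := by
  set W := star (hρ.eigenvectorUnitary : Matrix k k ℂ) * hH.eigenvectorUnitary
  have hW : W ∈ unitaryGroup k ℂ :=
    Submonoid.mul_mem _ (Unitary.star_mem hρ.eigenvectorUnitary.2) hH.eigenvectorUnitary.2
  rw [obj, obj_exp_sub_one hH, re_trace_mul_eq_sum hρ hH, entSum]
  simp only [mul_add, mul_sub, Finset.sum_add_distrib, Finset.sum_sub_distrib]
  rw [Finset.sum_comm (f := fun i j => Complex.normSq (W i j) * Real.exp (hH.eigenvalues j - 1))]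
  simp only [← Finset.sum_mul, sum_normSq_row_eq_one hW, sum_normSq_col_eq_one hW]
  simp only [one_mul, mul_comm (Complex.normSq _)]
  ring

theorem obj_exp_sub_one_le (hH : H.IsHermitian) (hσ : (NormedSpace.exp (H - 1)).IsHermitian)
    (hρ : ρ.PosSemidef) : obj H hσ ≤ obj H hρ.1 := by
  rw [← sub_nonneg, obj_sub_obj_exp_sub_one hH hσ hρ.1]
  exact Finset.sum_nonneg fun i _ => Finset.sum_nonneg fun j _ =>
    mul_nonneg (Complex.normSq_nonneg _)
      (Real.mul_log_sub_mul_add_exp_nonneg _ (hρ.eigenvalues_nonneg i))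

theorem eq_exp_sub_one_of_obj_eq (hH : H.IsHermitian)
    (hσ : (NormedSpace.exp (H - 1)).IsHermitian) (hρ : ρ.PosSemidef)
    (heq : obj H hρ.1 = obj H hσ) : ρ = NormedSpace.exp (H - 1) := by
  have hsum := obj_sub_obj_exp_sub_one hH hσ hρ.1
  rw [heq, sub_self] at hsum
  rw [hρ.1.eq_conj_diagonal, hH.exp_sub_one_eq_conj_diagonal,
    conj_diagonal_eq_conj_diagonal_iff hρ.1.eigenvectorUnitary.2 hH.eigenvectorUnitary.2]
  intro i j hij
  have hterm_nonneg := fun i j => mul_nonneg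
    (Complex.normSq_nonneg ((star (hρ.1.eigenvectorUnitary : Matrix k k ℂ) *
      hH.eigenvectorUnitary) i j))
    (Real.mul_log_sub_mul_add_exp_nonneg (hH.eigenvalues j) (hρ.eigenvalues_nonneg i))
  have hrow := (Finset.sum_eq_zero_iff_of_nonneg fun i _ => Finset.sum_nonneg fun j _ =>
    hterm_nonneg i j).mp hsum.symm i (Finset.mem_univ i)
  have hterm := (Finset.sum_eq_zero_iff_of_nonneg fun j _ => hterm_nonneg i j).mp hrow j
    (Finset.mem_univ j)
  rw [mul_eq_zero, Complex.normSq_eq_zero, or_iff_right hij,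
    Real.mul_log_sub_mul_add_exp_eq_zero_iff (hρ.eigenvalues_nonneg i)] at hterm
  rw [hterm]

end Gibbs

/-- `ρ_RB = exp(I ⊗ log σ_B − βΔ + Λ_R ⊗ I − I)` is positive definite
and is the unique minimizer of the partial Lagrangian
`ρ ↦ Tr(ρ log ρ) − Tr(ρ (I ⊗ log σ_B − βΔ + Λ_R ⊗ I))` over PSD matrices. -/
theorem stmt17 {n m : Type*} [Fintype n] [Fintype m] [DecidableEq n] [DecidableEq m]
    (σB : Matrix m m ℂ) (hσ : σB.PosDef)
    (Δ : Matrix (n × m) (n × m) ℂ) (hΔ : Δ.PosSemidef)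
    (Λ : Matrix n n ℂ) (hΛ : Λ.IsHermitian) (β : ℝ) :
    (NormedSpace.exp
        ((1 : Matrix n n ℂ) ⊗ₖ matLog hσ.1 - (β : ℂ) • Δ +
          Λ ⊗ₖ (1 : Matrix m m ℂ) - 1)).PosDef ∧
    ∀ (h : (NormedSpace.exp
        ((1 : Matrix n n ℂ) ⊗ₖ matLog hσ.1 - (β : ℂ) • Δ +
          Λ ⊗ₖ (1 : Matrix m m ℂ) - 1)).IsHermitian)
      (ρ : Matrix (n × m) (n × m) ℂ) (hρ : ρ.PosSemidef),
      obj ((1 : Matrix n n ℂ) ⊗ₖ matLog hσ.1 - (β : ℂ) • Δ +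
          Λ ⊗ₖ (1 : Matrix m m ℂ)) h ≤
        obj ((1 : Matrix n n ℂ) ⊗ₖ matLog hσ.1 - (β : ℂ) • Δ +
          Λ ⊗ₖ (1 : Matrix m m ℂ)) hρ.1 ∧
      (obj ((1 : Matrix n n ℂ) ⊗ₖ matLog hσ.1 - (β : ℂ) • Δ +
            Λ ⊗ₖ (1 : Matrix m m ℂ)) hρ.1 =
          obj ((1 : Matrix n n ℂ) ⊗ₖ matLog hσ.1 - (β : ℂ) • Δ +
            Λ ⊗ₖ (1 : Matrix m m ℂ)) h →
        ρ = NormedSpace.exp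
          ((1 : Matrix n n ℂ) ⊗ₖ matLog hσ.1 - (β : ℂ) • Δ +
            Λ ⊗ₖ (1 : Matrix m m ℂ) - 1)) := by
  have hH : ((1 : Matrix n n ℂ) ⊗ₖ matLog hσ.1 - (β : ℂ) • Δ +
      Λ ⊗ₖ (1 : Matrix m m ℂ)).IsHermitian :=
    ((isHermitian_one.kronecker (matLog_isHermitian hσ.1)).sub
      (hΔ.1.smul (Complex.conj_ofReal β))).add (hΛ.kronecker isHermitian_one)
  exact ⟨(hH.sub isHermitian_one).posDef_exp, fun h ρ hρ =>
    ⟨obj_exp_sub_one_le hH h hρ, eq_exp_sub_one_of_obj_eq hH h hρ⟩⟩
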